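/- Let A be a cosimplicial abelian group. The inclusion of cochain complexes cN_{k+1}A ⊆ cN_k A is a quasi-isomorphism for every k ≥ 0 (i.e. induces isomorphisms on all cohomology groups). -/

import Mathlib

/-- A cosimplicial abelian group, given by abelian groups `A n` for `n : ℕ` together with
coface homomorphisms `d n i : A n →+ A (n+1)` (the map `d^i`, meaningful for `i ≤ n+1`) and
codegeneracy homomorphisms `s n i : A (n+1) →+ A n` (the map `s^i`, meaningful for `i ≤ n`),
subject to the standard cosimplicial identities. -/
structure CosAb (A : ℕ → Type) [∀ n, AddCommGroup (A n)] : Type where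
  d : ∀ n : ℕ, ℕ → (A n →+ A (n + 1))
  s : ∀ n : ℕ, ℕ → (A (n + 1) →+ A n)
  /-- `d^{j+1} ∘ d^i = d^i ∘ d^j` for `i ≤ j` (i.e. `d^j d^i = d^i d^{j-1}` for `i < j`). -/
  dd : ∀ n i j : ℕ, i ≤ j → j ≤ n + 1 →
    (d (n + 1) (j + 1)).comp (d n i) = (d (n + 1) i).comp (d n j)
  /-- `s^i d^i = id`. -/
  sd_self : ∀ n i : ℕ, i ≤ n → (s n i).comp (d n i) = AddMonoidHom.id (A n)
  /-- `s^i d^{i+1} = id`. -/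
  sd_succ : ∀ n i : ℕ, i ≤ n → (s n i).comp (d n (i + 1)) = AddMonoidHom.id (A n)
  /-- `s^{j+1} d^i = d^i s^j` for `i ≤ j` (i.e. `s^j d^i = d^i s^{j-1}` for `i < j`). -/
  sd_lt : ∀ n i j : ℕ, i ≤ j → j ≤ n →
    (s (n + 1) (j + 1)).comp (d (n + 1) i) = (d n i).comp (s n j)
  /-- `s^j d^i = d^{i-1} s^j` for `i > j + 1`. -/
  sd_gt : ∀ n i j : ℕ, j + 1 < i → i ≤ n + 2 →
    (s (n + 1) j).comp (d (n + 1) i) = (d n (i - 1)).comp (s n j)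
  /-- `s^j s^i = s^i s^{j+1}` for `i ≤ j`. -/
  ss : ∀ n i j : ℕ, i ≤ j → j ≤ n →
    (s n j).comp (s (n + 1) i) = (s n i).comp (s (n + 1) (j + 1))

/-- The coboundary `δ = Σ_{i=0}^{n+1} (-1)^i d^i : A^n → A^{n+1}`. -/
def deltaAp {A : ℕ → Type} [∀ n, AddCommGroup (A n)] (C : CosAb A) (n : ℕ) (a : A n) :
    A (n + 1) :=
  ∑ i ∈ Finset.range (n + 2), (-1 : ℤ) ^ i • C.d n i a

/-- Membership in `cN_k A^n`: the intersection of the kernels of `s^0, …, s^k` when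
`n ≥ k + 1`, and all of `A^n` when `n ≤ k`. -/
def cNkMem {A : ℕ → Type} [∀ n, AddCommGroup (A n)] (C : CosAb A) (k n : ℕ) (a : A n) : Prop :=
  ∀ (m : ℕ) (hm : n = m + 1) (i : ℕ), i ≤ k → k + 1 ≤ n →
    C.s m i (cast (congrArg A hm) a) = 0

namespace CosAbAux

variable {A : ℕ → Type} [∀ n, AddCommGroup (A n)] (C : CosAb A)

lemma dd' (n i j : ℕ) (h1 : i ≤ j) (h2 : j ≤ n + 1) (x : A n) :
    C.d (n+1) (j+1) (C.d n i x) = C.d (n+1) i (C.d n j x) :=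
  DFunLike.congr_fun (C.dd n i j h1 h2) x

lemma sd_self' (n i : ℕ) (h : i ≤ n) (x : A n) : C.s n i (C.d n i x) = x :=
  DFunLike.congr_fun (C.sd_self n i h) x

lemma sd_succ' (n i : ℕ) (h : i ≤ n) (x : A n) : C.s n i (C.d n (i+1) x) = x :=
  DFunLike.congr_fun (C.sd_succ n i h) x

lemma sd_lt' (n i j : ℕ) (h1 : i ≤ j) (h2 : j ≤ n) (x : A (n+1)) :
    C.s (n+1) (j+1) (C.d (n+1) i x) = C.d n i (C.s n j x) :=
  DFunLike.congr_fun (C.sd_lt n i j h1 h2) x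

lemma sd_gt' (n i j : ℕ) (h1 : j + 1 < i) (h2 : i ≤ n + 2) (x : A (n+1)) :
    C.s (n+1) j (C.d (n+1) i x) = C.d n (i-1) (C.s n j x) :=
  DFunLike.congr_fun (C.sd_gt n i j h1 h2) x

lemma ss' (n i j : ℕ) (h1 : i ≤ j) (h2 : j ≤ n) (x : A (n+2)) :
    C.s n j (C.s (n+1) i x) = C.s n i (C.s (n+1) (j+1) x) :=
  DFunLike.congr_fun (C.ss n i j h1 h2) x

lemma delta_sub (n : ℕ) (x y : A n) :
    deltaAp C n (x - y) = deltaAp C n x - deltaAp C n y := by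
  simp [deltaAp, map_sub, smul_sub, Finset.sum_sub_distrib]

lemma delta_zero (n : ℕ) : deltaAp C n (0 : A n) = 0 := by
  simp [deltaAp]

lemma delta_delta (n : ℕ) (x : A n) : deltaAp C (n+1) (deltaAp C n x) = 0 := by
  simp only [deltaAp, map_sum, map_zsmul, Finset.smul_sum]
  rw [Finset.sum_comm, Finset.range_eq_Ico, Finset.range_eq_Ico]
  have hsplit : ∀ i ∈ Finset.Ico 0 (n+2),
      (∑ j ∈ Finset.Ico 0 (n+1+2), (-1:ℤ)^j • ((-1:ℤ)^i • C.d (n+1) j (C.d n i x)))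
      = (∑ j ∈ Finset.Ico 0 (i+1), (-1:ℤ)^j • ((-1:ℤ)^i • C.d (n+1) j (C.d n i x)))
        + ∑ j ∈ Finset.Ico (i+1) (n+1+2), (-1:ℤ)^j • ((-1:ℤ)^i • C.d (n+1) j (C.d n i x)) := by
    intro i hi
    have hi' := (Finset.mem_Ico.mp hi).2
    rw [← Finset.sum_Ico_consecutive _ (Nat.zero_le (i+1)) (by omega)]
  rw [Finset.sum_congr rfl hsplit, Finset.sum_add_distrib, ← Finset.sum_Ico_Ico_comm,
    ← Finset.sum_add_distrib]
  apply Finset.sum_eq_zero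
  intro i hi
  have hi' := (Finset.mem_Ico.mp hi).2
  rw [Finset.sum_Ico_eq_sum_range, Finset.sum_Ico_eq_sum_range,
    show n+1+2-(i+1) = n+2-i by omega, ← Finset.sum_add_distrib]
  apply Finset.sum_eq_zero
  intro l hl
  have hl' := Finset.mem_range.mp hl
  rw [show i+1+l = (i+l)+1 by omega, dd' C n i (i+l) (by omega) (by omega),
    smul_smul, smul_smul, ← add_smul,
    show (-1:ℤ)^i * (-1:ℤ)^(i+l) + (-1:ℤ)^((i+l)+1) * (-1:ℤ)^i = 0 by ring, zero_smul]

def Dop (k n : ℕ) (y : A n) : A (n+1) :=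
  ∑ j ∈ Finset.Ico (k+2) (n+2), (-1:ℤ)^j • C.d n j y

lemma Dop_smul (k n : ℕ) (z : ℤ) (y : A n) : Dop C k n (z • y) = z • Dop C k n y := by
  unfold Dop
  rw [Finset.smul_sum]
  refine Finset.sum_congr rfl fun j _ => ?_
  rw [map_zsmul, smul_comm]

lemma low_sum_lt (m i : ℕ) (hi : i ≤ m+1) (x : A (m+1)) (h : ∀ j, j + 1 ≤ i → C.s m j x = 0) :
    ∑ j ∈ Finset.Ico 0 i, C.s (m+1) i ((-1:ℤ)^j • C.d (m+1) j x) = 0 := by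
  apply Finset.sum_eq_zero
  intro j hj
  have hj' : j < i := (Finset.mem_Ico.mp hj).2
  obtain ⟨i', rfl⟩ : ∃ i', i = i'+1 := ⟨i-1, by omega⟩
  rw [map_zsmul, sd_lt' C m j i' (by omega) (by omega), h i' (by omega), map_zero, smul_zero]

lemma pair_sum (m i : ℕ) (him : i ≤ m+1) (x : A (m+1)) :
    ∑ j ∈ Finset.Ico i (i+2), C.s (m+1) i ((-1:ℤ)^j • C.d (m+1) j x) = 0 := by
  rw [show i+2 = (i+1)+1 from rfl, Finset.sum_Ico_succ_top (by omega),
    Finset.sum_Ico_succ_top (by omega), Finset.Ico_self, Finset.sum_empty, zero_add,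
    map_zsmul, map_zsmul, sd_self' C (m+1) i him, sd_succ' C (m+1) i him,
    pow_succ, mul_neg_one, neg_smul, add_neg_cancel]

lemma high_sum (m i : ℕ) (x : A (m+1)) (hx : C.s m i x = 0) :
    ∑ j ∈ Finset.Ico (i+2) (m+1+2), C.s (m+1) i ((-1:ℤ)^j • C.d (m+1) j x) = 0 := by
  apply Finset.sum_eq_zero
  intro j hj
  rw [Finset.mem_Ico] at hj
  rw [map_zsmul, sd_gt' C m j i (by omega) (by omega), hx, map_zero, smul_zero]

lemma tail_sum (k m : ℕ) (y : A (m+1)) :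
    ∑ j ∈ Finset.Ico (k+1+2) (m+1+2), C.s (m+1) (k+1) ((-1:ℤ)^j • C.d (m+1) j y)
      = -Dop C k m (C.s m (k+1) y) := by
  unfold Dop
  rw [Finset.sum_Ico_eq_sum_range, Finset.sum_Ico_eq_sum_range,
    show m+1+2-(k+1+2) = m+2-(k+2) by omega, ← Finset.sum_neg_distrib]
  refine Finset.sum_congr rfl fun l hl => ?_
  have hl' := Finset.mem_range.mp hl
  rw [map_zsmul, sd_gt' C m (k+1+2+l) (k+1) (by omega) (by omega),
    show k+1+2+l-1 = k+2+l by omega,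
    show k+1+2+l = (k+2+l)+1 by omega, pow_succ, mul_neg_one, neg_smul]

lemma s_delta_low (m i : ℕ) (x : A (m+1)) (him : i ≤ m+1)
    (h : ∀ j, j ≤ i → C.s m j x = 0) :
    C.s (m+1) i (deltaAp C (m+1) x) = 0 := by
  rw [deltaAp, map_sum, Finset.range_eq_Ico,
    ← Finset.sum_Ico_consecutive _ (Nat.zero_le (i+2)) (by omega : i+2 ≤ m+1+2),
    ← Finset.sum_Ico_consecutive _ (Nat.zero_le i) (by omega : i ≤ i+2),
    low_sum_lt C m i him x (fun j hj => h j (by omega)), pair_sum C m i him x,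
    high_sum C m i x (h i le_rfl), add_zero, add_zero]

lemma s_delta_top (k m : ℕ) (x : A (m+1)) (hkm : k ≤ m) (h : ∀ j, j ≤ k → C.s m j x = 0) :
    C.s (m+1) (k+1) (deltaAp C (m+1) x) = -Dop C k m (C.s m (k+1) x) := by
  rw [deltaAp, map_sum, Finset.range_eq_Ico,
    ← Finset.sum_Ico_consecutive _ (Nat.zero_le (k+1+2)) (by omega : k+1+2 ≤ m+1+2),
    ← Finset.sum_Ico_consecutive _ (Nat.zero_le (k+1)) (by omega : k+1 ≤ k+1+2),
    low_sum_lt C m (k+1) (by omega) x (fun j hj => h j (by omega)),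
    pair_sum C m (k+1) (by omega) x, tail_sum C k m x, zero_add, zero_add]

lemma s_Dop (k m : ℕ) (t : A (m+1)) (hkm : k ≤ m) :
    C.s (m+1) (k+1) (Dop C k (m+1) t) = (-1:ℤ)^k • t - Dop C k m (C.s m (k+1) t) := by
  have hL : Dop C k (m+1) t
      = ((-1:ℤ)^(k+2) • C.d (m+1) (k+2) t)
        + ∑ j ∈ Finset.Ico (k+1+2) (m+1+2), (-1:ℤ)^j • C.d (m+1) j t := by
    unfold Dop
    rw [← Finset.sum_Ico_consecutive _ (by omega : k+2 ≤ k+1+2) (by omega : k+1+2 ≤ m+1+2)]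
    congr 1
    rw [Finset.sum_Ico_eq_sum_range, show k+1+2-(k+2) = 1 by omega, Finset.sum_range_one,
      add_zero]
  rw [hL, map_add, map_zsmul, sd_succ' C (m+1) (k+1) (by omega), map_sum, tail_sum C k m t,
    show ((-1:ℤ))^(k+2) = (-1:ℤ)^k by ring, sub_eq_add_neg]

lemma master (k m : ℕ) (hkm : k ≤ m) (x : A (m+2))
    (hs : ∀ j, j ≤ k → C.s (m+1) j x = 0)
    (hd : C.s (m+2) (k+1) (deltaAp C (m+2) x) = 0) :
    ∃ w : A (m+1), (∀ j, j ≤ k → C.s m j w = 0) ∧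
      (∀ j, j ≤ k+1 → C.s (m+1) j (x - deltaAp C (m+1) w) = 0) := by
  set t := C.s (m+1) (k+1) x with ht
  have hDt : Dop C k (m+1) t = 0 := by
    have h0 := s_delta_top C k (m+1) x (by omega) hs
    rw [hd] at h0
    rw [← neg_eq_zero, h0]
  rcases Nat.eq_or_lt_of_le hkm with heq | hlt
  · subst heq
    have ht0 : t = 0 := by
      have h1 : ((-1:ℤ)^(k+2)) • C.d (k+1) (k+2) t = 0 := by
        have h2 := hDt
        unfold Dop at h2
        rwa [show k+1+2 = (k+2)+1 from rfl, Finset.sum_Ico_succ_top (by omega),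
          Finset.Ico_self, Finset.sum_empty, zero_add] at h2
      have h2 := congrArg (C.s (k+1) (k+1)) h1
      rw [map_zsmul, sd_succ' C (k+1) (k+1) (by omega), map_zero] at h2
      have h3 : ((-1:ℤ)^(k+2) * (-1:ℤ)^(k+2)) • t = 0 := by
        rw [← smul_smul, h2, smul_zero]
      rwa [← pow_add, Even.neg_one_pow ⟨k+2, by ring⟩, one_smul] at h3
    refine ⟨0, fun j hj => map_zero _, fun j hj => ?_⟩
    rw [delta_zero, sub_zero]
    rcases Nat.lt_or_ge j (k+1) with h | h
    · exact hs j (by omega)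
    · rw [show j = k+1 by omega, ← ht]
      exact ht0
  · obtain ⟨m', rfl⟩ : ∃ m', m = m'+1 := ⟨m-1, by omega⟩
    have hk' : k ≤ m' := by omega
    have hDst : Dop C k (m'+1) (C.s (m'+1) (k+1) t) = (-1:ℤ)^k • t := by
      have h0 := s_Dop C k (m'+1) t (by omega)
      rw [hDt, map_zero] at h0
      exact (sub_eq_zero.mp h0.symm).symm
    set u := (-1:ℤ)^(k+1) • C.s (m'+1) (k+1) t with hu
    have hDu : Dop C k (m'+1) u = -t := by
      rw [hu, Dop_smul, hDst, smul_smul, ← pow_add,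
        show k+1+k = 2*k+1 by ring, Odd.neg_one_pow ⟨k, by ring⟩, neg_smul, one_smul]
    have hstt : ∀ j, j ≤ k → C.s (m'+1) j t = 0 := by
      intro j hj
      rw [ht, ← ss' C (m'+1) j k hj (by omega) x, hs j (by omega), map_zero]
    have hsu : ∀ j, j ≤ k → C.s m' j u = 0 := by
      intro j hj
      rw [hu, map_zsmul, ← ss' C m' j k hj hk' t, hstt j hj, map_zero, smul_zero]
    refine ⟨C.d (m'+1) (k+2) u, fun j hj => ?_, fun j hj => ?_⟩
    · rw [sd_gt' C m' (k+2) j (by omega) (by omega), show k+2-1 = k+1 from rfl,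
        hsu j hj, map_zero]
    · have hsw : C.s (m'+1) (k+1) (C.d (m'+1) (k+2) u) = u :=
        sd_succ' C (m'+1) (k+1) (by omega) u
      rw [map_sub]
      rcases Nat.lt_or_ge j (k+1) with h | h
      · have hjk : j ≤ k := by omega
        have hw : ∀ j', j' ≤ j → C.s (m'+1) j' (C.d (m'+1) (k+2) u) = 0 := by
          intro j' hj'
          rw [sd_gt' C m' (k+2) j' (by omega) (by omega), show k+2-1 = k+1 from rfl,
            hsu j' (by omega), map_zero]
        rw [hs j hjk, s_delta_low C (m'+1) j (C.d (m'+1) (k+2) u) (by omega) hw, sub_zero]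
      · have hj1 : j = k+1 := by omega
        subst hj1
        have htop : C.s (m'+2) (k+1) (deltaAp C (m'+2) (C.d (m'+1) (k+2) u)) = t := by
          rw [s_delta_top C k (m'+1) (C.d (m'+1) (k+2) u) (by omega)
            (fun j' hj' => by
              rw [sd_gt' C m' (k+2) j' (by omega) (by omega), show k+2-1 = k+1 from rfl,
                hsu j' hj', map_zero]),
            hsw, hDu, neg_neg]
        rw [htop, ← ht, sub_self]

lemma cNkMem_of_small (k n : ℕ) (hn : n ≤ k) (a : A n) : cNkMem C k n a := by
  intro m hm i hik hkn
  exact absurd hkn (by omega)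

lemma cNkMem_succ_level (k m : ℕ) (a : A (m+1)) (h : ∀ i, i ≤ k → C.s m i a = 0) :
    cNkMem C k (m+1) a := by
  intro m' hm' i hik _
  obtain rfl : m' = m := by omega
  rw [cast_eq]
  exact h i hik

lemma cNkMem_elim (k m : ℕ) (a : A (m+1)) (h : cNkMem C k (m+1) a) (hk : k+1 ≤ m+1)
    (i : ℕ) (hik : i ≤ k) : C.s m i a = 0 := by
  have h0 := h m rfl i hik hk
  rwa [cast_eq] at h0

end CosAbAux

open CosAbAux

/-- The inclusion of cochain complexes `cN_{k+1}A ⊆ cN_k A` is a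
quasi-isomorphism for every `k ≥ 0`: in degree `0` the complexes agree, every
`cN_k`-cocycle is cohomologous (via a coboundary of an element of `cN_k`) to a
`cN_{k+1}`-cocycle, and two `cN_{k+1}`-cocycles which are cohomologous in `cN_k A` are
already cohomologous in `cN_{k+1}A`. -/
theorem cNk_succ_inclusion_quasiIso
    (A : ℕ → Type) [∀ n, AddCommGroup (A n)] (C : CosAb A) (k : ℕ) :
    (∀ a : A 0, deltaAp C 0 a = 0 → ∃ b : A 0, deltaAp C 0 b = 0 ∧ a = b) ∧
    (∀ (n : ℕ) (a : A (n + 1)), cNkMem C k (n + 1) a → deltaAp C (n + 1) a = 0 →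
      ∃ (b : A (n + 1)) (c : A n), cNkMem C (k + 1) (n + 1) b ∧ deltaAp C (n + 1) b = 0 ∧
        cNkMem C k n c ∧ a - b = deltaAp C n c) ∧
    (∀ (n : ℕ) (b b' : A (n + 1)) (c : A n),
      cNkMem C (k + 1) (n + 1) b → cNkMem C (k + 1) (n + 1) b' →
      deltaAp C (n + 1) b = 0 → deltaAp C (n + 1) b' = 0 →
      cNkMem C k n c → b - b' = deltaAp C n c →
      ∃ c' : A n, cNkMem C (k + 1) n c' ∧ b - b' = deltaAp C n c') := by
  refine ⟨fun a ha => ⟨a, ha, rfl⟩, ?_, ?_⟩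
  · intro n a ha hda
    rcases Nat.lt_or_ge n (k+1) with hn | hn
    · refine ⟨a, 0, cNkMem_of_small C (k+1) (n+1) (by omega) a, hda,
        cNkMem_of_small C k n (by omega) 0, ?_⟩
      rw [sub_self, delta_zero]
    · obtain ⟨m, rfl⟩ : ∃ m, n = m+1 := ⟨n-1, by omega⟩
      have hkm : k ≤ m := by omega
      have hs : ∀ j, j ≤ k → C.s (m+1) j a = 0 :=
        fun j hj => cNkMem_elim C k (m+1) a ha (by omega) j hj
      have hd : C.s (m+2) (k+1) (deltaAp C (m+2) a) = 0 := by rw [hda, map_zero]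
      obtain ⟨w, hw1, hw2⟩ := master C k m hkm a hs hd
      refine ⟨a - deltaAp C (m+1) w, w,
        cNkMem_succ_level C (k+1) (m+1) _ (fun i hi => hw2 i hi), ?_,
        cNkMem_succ_level C k m w hw1, ?_⟩
      · rw [delta_sub, hda, delta_delta, sub_zero]
      · exact (sub_sub_cancel a _).symm ▸ rfl
  · intro n b b' c hb hb' hdb hdb' hc heq
    rcases Nat.lt_or_ge n (k+2) with hn | hn
    · exact ⟨c, cNkMem_of_small C (k+1) n (by omega) c, heq⟩
    · obtain ⟨m, rfl⟩ : ∃ m, n = m+2 := ⟨n-2, by omega⟩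
      have hkm : k ≤ m := by omega
      have hs : ∀ j, j ≤ k → C.s (m+1) j c = 0 :=
        fun j hj => cNkMem_elim C k (m+1) c hc (by omega) j hj
      have hd : C.s (m+2) (k+1) (deltaAp C (m+2) c) = 0 := by
        rw [← heq, map_sub,
          cNkMem_elim C (k+1) (m+2) b hb (by omega) (k+1) le_rfl,
          cNkMem_elim C (k+1) (m+2) b' hb' (by omega) (k+1) le_rfl, sub_zero]
      obtain ⟨w, hw1, hw2⟩ := master C k m hkm c hs hd
      refine ⟨c - deltaAp C (m+1) w,
        cNkMem_succ_level C (k+1) (m+1) _ (fun i hi => hw2 i hi), ?_⟩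
      rw [delta_sub, delta_delta, sub_zero]
      exact heq
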